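/- Let u, u', w be nonzero complex numbers. Then the function z ↦ ((−w/u' − 0) * (z − u)) / ((−w/u' − z) * (0 − u)) tends to −w/(u' * u) as z tends to infinity in ℂ (i.e., along the cobounded filter on ℂ). Equivalently, the cross-ratio of the four points P₀ = −w/u', P₁ = 0, P₂ = ∞, P₃ = u on the Riemann sphere equals −w/(u'·u). -/

import Mathlib

/-! Letting `P₂ → ∞`, the factor `(P₂ - P₃) / (P₀ - P₂)` of the cross-ratio tends to `-1`,
since it equals `-1 + (P₀ - P₃) / (P₀ - P₂)`. Hence the cross-ratio at `P₂ = ∞` is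
`(P₀ - P₁) / (P₃ - P₁)`, which for `P₀ = -w/u'`, `P₁ = 0`, `P₃ = u` is `-w/(u'u)`. -/

open Filter Topology Bornology

section NormedField

variable {𝕜 : Type*} [NormedField 𝕜]

def crossRatio (p₀ p₁ p₂ p₃ : 𝕜) : 𝕜 :=
  ((p₀ - p₁) * (p₂ - p₃)) / ((p₀ - p₂) * (p₁ - p₃))

theorem tendsto_sub_div_const_sub_cobounded (a b : 𝕜) :
    Tendsto (fun z => (z - b) / (a - z)) (cobounded 𝕜) (𝓝 (-1)) := by
  have h_inv : Tendsto (fun z => (a - z)⁻¹) (cobounded 𝕜) (𝓝 0) :=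
    tendsto_inv₀_cobounded.comp (tendsto_const_sub_cobounded a)
  have h_lim : Tendsto (fun z => -1 + (a - b) * (a - z)⁻¹) (cobounded 𝕜) (𝓝 (-1)) := by
    simpa using (h_inv.const_mul (a - b)).const_add (-1)
  refine h_lim.congr' ?_
  filter_upwards [eventually_ne_cobounded a] with z hz
  have hz' : a - z ≠ 0 := sub_ne_zero.mpr (Ne.symm hz)
  field_simp
  ring

theorem tendsto_crossRatio_cobounded (p₀ p₁ p₃ : 𝕜) :
    Tendsto (fun z => crossRatio p₀ p₁ z p₃) (cobounded 𝕜)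
      (𝓝 ((p₀ - p₁) / (p₃ - p₁))) := by
  have h_split : (fun z => crossRatio p₀ p₁ z p₃) =
      fun z => (p₀ - p₁) / (p₁ - p₃) * ((z - p₃) / (p₀ - z)) := by
    funext z
    rw [crossRatio, mul_comm (p₀ - z), mul_div_mul_comm]
  have h_lim : (p₀ - p₁) / (p₃ - p₁) = (p₀ - p₁) / (p₁ - p₃) * -1 := by
    rw [← neg_sub p₁ p₃, div_neg, mul_neg_one]
  rw [h_split, h_lim]
  exact (tendsto_sub_div_const_sub_cobounded p₀ p₃).const_mul _

end NormedField

theorem cross_ratio_tendsto_general (u u' w : ℂ) :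
    Filter.Tendsto
      (fun z : ℂ => ((-w / u' - 0) * (z - u)) / ((-w / u' - z) * (0 - u)))
      (Bornology.cobounded ℂ) (nhds (-w / (u' * u))) := by
  have h_value : -w / (u' * u) = (-w / u' - 0) / (u - 0) := by
    rw [sub_zero, sub_zero, div_div]
  rw [h_value]
  exact tendsto_crossRatio_cobounded (-w / u') 0 u

/-- For nonzero complex numbers `u`, `u'`, `w`, the function
`z ↦ ((−w/u' − 0) * (z − u)) / ((−w/u' − z) * (0 − u))` tends to
`−w / (u' * u)` as `z → ∞` in `ℂ` (along the cobounded filter):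
the cross-ratio of `P₀ = −w/u'`, `P₁ = 0`, `P₂ = ∞`, `P₃ = u` equals
`−w/(u'·u)`. -/
theorem cross_ratio_tendsto (u u' w : ℂ) (hu : u ≠ 0) (hu' : u' ≠ 0)
    (hw : w ≠ 0) :
    Filter.Tendsto
      (fun z : ℂ => ((-w / u' - 0) * (z - u)) / ((-w / u' - z) * (0 - u)))
      (Bornology.cobounded ℂ) (nhds (-w / (u' * u))) :=
  cross_ratio_tendsto_general u u' w
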